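/- In the setting of the quadtree mixture algorithm (model prior p(m) = ∏_{s ∈ L^m}(1 − g_s) ∏_{s' ∈ I^m} g_{s'} with g_s = 0 for singleton blocks; strictly positive per-block predictive pmfs q̃(· | v^{t−1}, s); likelihood p(v^t | m) = ∏_{i ≤ t} q̃(v_i | v^{i−1}, s_m(i)); and the recursive definitions of q(v_t | v^{t−1}, s) and the updates g_{s|t}), the posterior over models retains the product form of the prior: for every t ≥ 0 and every full quadtree m of depth ≤ d_max, p(m | v^t) = ∏_{s ∈ L^m} (1 − g_{s|t}) · ∏_{s' ∈ I^m} g_{s'|t}. -/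

import Mathlib

inductive FullTree (k : ℕ) : ℕ → Type where
  | leaf {D : ℕ} : FullTree k D
  | node {D : ℕ} (c : Fin k → FullTree k D) : FullTree k (D + 1)

namespace FullTree

def equivZero (k : ℕ) : FullTree k 0 ≃ Unit where
  toFun _ := ()
  invFun _ := .leaf
  left_inv t := by cases t; rfl
  right_inv _ := rfl

def equivSucc (k D : ℕ) : FullTree k (D + 1) ≃ Option (Fin k → FullTree k D) where
  toFun t := match t with
    | .leaf => none
    | .node c => some c
  invFun o := match o with
    | none => .leaf
    | some c => .node c
  left_inv t := by cases t <;> rfl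
  right_inv o := by cases o <;> rfl

instance instFintype (k : ℕ) : (D : ℕ) → Fintype (FullTree k D)
  | 0 => Fintype.ofEquiv Unit (equivZero k).symm
  | (D + 1) => letI := instFintype k D; Fintype.ofEquiv _ (equivSucc k D).symm

noncomputable instance (k D : ℕ) : DecidableEq (FullTree k D) := Classical.decEq _

/-- The set of (paths to) leaf nodes of a full subtree whose root has path `u`. -/
def leaves {k : ℕ} : {D : ℕ} → List (Fin k) → FullTree k D → Finset (List (Fin k))
  | _, u, .leaf => {u}
  | _, u, .node c => Finset.univ.biUnion fun i => leaves (u ++ [i]) (c i)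

/-- The set of (paths to) inner nodes of a full subtree whose root has path `u`. -/
def inners {k : ℕ} : {D : ℕ} → List (Fin k) → FullTree k D → Finset (List (Fin k))
  | _, _, .leaf => ∅
  | _, u, .node c => insert u (Finset.univ.biUnion fun i => inners (u ++ [i]) (c i))

/-- The weight ∏_{u ∈ L^T} (1 - g u) * ∏_{u ∈ I^T} g u of a full subtree rooted at path `u`. -/
noncomputable def weight {k D : ℕ} (g : List (Fin k) → ℝ) (u : List (Fin k))
    (T : FullTree k D) : ℝ :=
  (∏ s ∈ leaves u T, (1 - g s)) * ∏ s ∈ inners u T, g s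

end FullTree

namespace FullTree

/-- Follow the path `p` down the full subtree `T` (whose root has path `u`) until a leaf of
`T` is reached; returns the path of that leaf.  For a pixel `p` (a path of full length
`dmax`), `leafOf [] m p` is the unique leaf block `s_m` of `m` containing the pixel `p`. -/
def leafOf {k : ℕ} : {D : ℕ} → List (Fin k) → FullTree k D → List (Fin k) → List (Fin k)
  | _, u, .leaf, _ => u
  | _, u, .node _, [] => u
  | _, u, .node c, i :: p => leafOf (u ++ [i]) (c i) p

end FullTree

/-- The likelihood `p(v^{t-1} | m) = ∏_{i < t} q̃(v_i | v^{i-1}, s_m(i))` of the first `t`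
pixel values under model `m`, where `qt i s x = q̃(x | v^{i-1}, s)` is the per-block
predictive pmf and `s_m(i)` the unique leaf of `m` containing pixel `i`. -/
noncomputable def like (dmax : ℕ) {V : Type} (qt : ℕ → List (Fin 4) → V → ℝ)
    (v : ℕ → V) (pix : ℕ → List (Fin 4)) (m : FullTree 4 dmax) (t : ℕ) : ℝ :=
  ∏ i ∈ Finset.range t, qt i (FullTree.leafOf [] m (pix i)) (v i)

/-- `Qd dmax qt v pix G t j` is the recursively mixed coding probability
`q(v_t | v^{t-1}, s)` at the block `s = (pix t).take (dmax - j)` on the path `S_t` of blocks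
containing pixel `t` (`j` is the distance from `s` down to the singleton block of `S_t`),
computed with the current weights `G = g_{·|t-1}`:
`q = q̃` at singleton blocks and `q = (1 - g_{s|t-1}) q̃ + g_{s|t-1} q(child)` otherwise. -/
noncomputable def Qd (dmax : ℕ) {V : Type} (qt : ℕ → List (Fin 4) → V → ℝ)
    (v : ℕ → V) (pix : ℕ → List (Fin 4)) (G : List (Fin 4) → ℝ) (t : ℕ) : ℕ → ℝ
  | 0 => qt t ((pix t).take dmax) (v t)
  | j + 1 =>
    (1 - G ((pix t).take (dmax - (j + 1)))) * qt t ((pix t).take (dmax - (j + 1))) (v t)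
      + G ((pix t).take (dmax - (j + 1))) * Qd dmax qt v pix G t j

/-- One step of the weight update: `g_{s|t} = g_{s|t-1}` if `s ∉ S_t` or `|s| = 1`
(`s ∈ S_t` iff `s` is a prefix of the pixel path `pix t`; `|s| = 1` iff `s.length = dmax`),
and `g_{s|t} = g_{s|t-1} · q(v_t | v^{t-1}, s_child) / q(v_t | v^{t-1}, s)` otherwise. -/
noncomputable def Gnext (dmax : ℕ) {V : Type} (qt : ℕ → List (Fin 4) → V → ℝ)
    (v : ℕ → V) (pix : ℕ → List (Fin 4)) (G : List (Fin 4) → ℝ) (t : ℕ)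
    (s : List (Fin 4)) : ℝ :=
  if s <+: pix t ∧ s.length < dmax then
    G s * Qd dmax qt v pix G t (dmax - s.length - 1) / Qd dmax qt v pix G t (dmax - s.length)
  else G s

/-- `GT dmax qt v pix g t s = g_{s|t-1}`: the sequentially updated weights, with
`GT ... 0 s = g_{s|-1} = g s`. -/
noncomputable def GT (dmax : ℕ) {V : Type} (qt : ℕ → List (Fin 4) → V → ℝ)
    (v : ℕ → V) (pix : ℕ → List (Fin 4)) (g : List (Fin 4) → ℝ) : ℕ → List (Fin 4) → ℝ
  | 0 => g
  | t + 1 => Gnext dmax qt v pix (GT dmax qt v pix g t) t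

/-!
Processing pixel `t` changes the weights only along the path `S_t` from the root
to the singleton block of the pixel, and the update rule is exactly what makes the identity
`w_G(T) · q̃(v_t | leaf of T above pixel t) = q(v_t | root of T) · w_{G'}(T)` hold for every
subtree `T` rooted on that path: at a leaf this is the definition of `q` rewritten, and at an
inner node only the child on the path changes. Iterating from the root, prior times
likelihood equals `∏_i q(v_i | v^{i-1}, root)` times the updated weight of `m`; as `g_{s|t}`
still vanishes on singleton blocks, the updated weights sum to one over all quadtrees, so this
product is the evidence and the posterior is the updated weight.
-/

lemma List.eq_of_append_singleton_prefix {α : Type*} {u s : List α} {i j : α}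
    (hi : u ++ [i] <+: s) (hj : u ++ [j] <+: s) : i = j := by
  simpa using List.prefix_of_prefix_length_le hi hj (by simp)

namespace FullTree

variable {k : ℕ}

lemma prefix_of_mem_leaves :
    ∀ {D : ℕ} {u s : List (Fin k)} {T : FullTree k D}, s ∈ leaves u T → u <+: s
  | _, u, _, .leaf, hs => by
      simp only [leaves, Finset.mem_singleton] at hs
      exact hs ▸ List.prefix_refl u
  | _, u, _, .node _, hs => by
      simp only [leaves, Finset.mem_biUnion, Finset.mem_univ, true_and] at hs
      obtain ⟨i, hi⟩ := hs
      exact (u.prefix_append [i]).trans (prefix_of_mem_leaves hi)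

lemma prefix_of_mem_inners :
    ∀ {D : ℕ} {u s : List (Fin k)} {T : FullTree k D}, s ∈ inners u T → u <+: s
  | _, _, _, .leaf, hs => by simp [inners] at hs
  | _, u, _, .node _, hs => by
      simp only [inners, Finset.mem_insert, Finset.mem_biUnion, Finset.mem_univ,
        true_and] at hs
      rcases hs with rfl | ⟨i, hi⟩
      · exact List.prefix_refl _
      · exact (u.prefix_append [i]).trans (prefix_of_mem_inners hi)

lemma weight_congr {D : ℕ} {G G' : List (Fin k) → ℝ} (u : List (Fin k)) (T : FullTree k D)
    (h : ∀ s, u <+: s → G s = G' s) : weight G u T = weight G' u T := by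
  unfold weight
  rw [Finset.prod_congr rfl fun s hs => by rw [h s (prefix_of_mem_leaves hs)],
    Finset.prod_congr rfl fun s hs => h s (prefix_of_mem_inners hs)]

lemma pairwiseDisjoint_children (u : List (Fin k)) (f : Fin k → Finset (List (Fin k)))
    (hf : ∀ i, ∀ s ∈ f i, u ++ [i] <+: s) :
    ((Finset.univ : Finset (Fin k)) : Set (Fin k)).PairwiseDisjoint f := by
  intro i _ j _ hij
  exact Finset.disjoint_left.mpr fun s hsi hsj =>
    hij (List.eq_of_append_singleton_prefix (hf i s hsi) (hf j s hsj))

@[simp]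
lemma weight_leaf {D : ℕ} (G : List (Fin k) → ℝ) (u : List (Fin k)) :
    weight G u (.leaf : FullTree k D) = 1 - G u := by
  simp [weight, leaves, inners]

lemma weight_node {D : ℕ} (G : List (Fin k) → ℝ) (u : List (Fin k))
    (c : Fin k → FullTree k D) :
    weight G u (.node c) = G u * ∏ i, weight G (u ++ [i]) (c i) := by
  have hu : u ∉ Finset.univ.biUnion fun i => inners (u ++ [i]) (c i) := by
    simp only [Finset.mem_biUnion, Finset.mem_univ, true_and, not_exists]
    intro i hi
    simpa using (prefix_of_mem_inners hi).length_le
  simp only [weight, leaves, inners]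
  rw [Finset.prod_insert hu,
    Finset.prod_biUnion (pairwiseDisjoint_children u _ fun _ _ => prefix_of_mem_leaves),
    Finset.prod_biUnion (pairwiseDisjoint_children u _ fun _ _ => prefix_of_mem_inners),
    Finset.prod_mul_distrib]
  ring

lemma leafOf_leaf {D : ℕ} (u p : List (Fin k)) : leafOf u (.leaf : FullTree k D) p = u := by
  cases p <;> rfl

lemma leafOf_node_cons {D : ℕ} (u : List (Fin k)) (c : Fin k → FullTree k D) (i : Fin k)
    (p : List (Fin k)) : leafOf u (.node c) (i :: p) = leafOf (u ++ [i]) (c i) p :=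
  rfl

lemma sum_weight_eq_one {n : ℕ} {G : List (Fin k) → ℝ}
    (hG : ∀ s, s.length = n → G s = 0) :
    ∀ (D : ℕ) (u : List (Fin k)), u.length + D = n → ∑ T : FullTree k D, weight G u T = 1
  | 0, u, hu => by
      rw [← (equivZero k).symm.sum_comp]
      simp [equivZero, hG u hu]
  | D + 1, u, hu => by
      rw [← (equivSucc k D).symm.sum_comp, Fintype.sum_option]
      have hchild (i : Fin k) : ∑ T : FullTree k D, weight G (u ++ [i]) T = 1 := by
        refine sum_weight_eq_one hG D (u ++ [i]) ?_
        rw [List.length_append, List.length_singleton]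
        omega
      change weight G u .leaf + ∑ c : Fin k → FullTree k D, weight G u (.node c) = 1
      simp only [weight_leaf, weight_node, ← Finset.mul_sum, ← Fintype.prod_sum, hchild,
        Finset.prod_const_one]
      ring

end FullTree

section Update

variable {dmax : ℕ} {V : Type} {qt : ℕ → List (Fin 4) → V → ℝ} {v : ℕ → V}
  {pix : ℕ → List (Fin 4)} {G : List (Fin 4) → ℝ} {t : ℕ}

lemma Qd_succ_of_append_eq {u p : List (Fin 4)} {j : ℕ} (hpixt : (pix t).length = dmax)
    (hup : u ++ p = pix t) (hp : p.length = j + 1) :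
    Qd dmax qt v pix G t (j + 1) = (1 - G u) * qt t u (v t) + G u * Qd dmax qt v pix G t j := by
  have hu : (pix t).take (dmax - (j + 1)) = u := by
    rw [← hup]
    apply List.take_left'
    have := congrArg List.length hup
    simp only [List.length_append] at this
    omega
  rw [Qd, hu]

lemma Qd_pos (hqt : ∀ t s x, 0 < qt t s x)
    (hG : ∀ s : List (Fin 4), s.length ≤ dmax → G s ∈ Set.Icc (0 : ℝ) 1) :
    ∀ j, 0 < Qd dmax qt v pix G t j
  | 0 => hqt _ _ _
  | j + 1 => by
      set s := (pix t).take (dmax - (j + 1))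
      obtain ⟨hG0, hG1⟩ := hG s (by simp only [s, List.length_take]; omega)
      have hq := hqt t s (v t)
      have hQ := Qd_pos hqt hG j
      calc 0 < min (qt t s (v t)) (Qd dmax qt v pix G t j) := lt_min hq hQ
        _ = (1 - G s) * min (qt t s (v t)) (Qd dmax qt v pix G t j)
            + G s * min (qt t s (v t)) (Qd dmax qt v pix G t j) := by ring
        _ ≤ Qd dmax qt v pix G t (j + 1) := by
          rw [Qd]
          gcongr
          · exact min_le_left _ _
          · exact min_le_right _ _

lemma Gnext_of_append_eq {u p : List (Fin 4)} {j : ℕ} (hpixt : (pix t).length = dmax)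
    (hup : u ++ p = pix t) (hp : p.length = j + 1) :
    Gnext dmax qt v pix G t u
      = G u * Qd dmax qt v pix G t j / Qd dmax qt v pix G t (j + 1) := by
  have hlen : u.length + (j + 1) = dmax := by
    rw [← hpixt, ← hup, List.length_append, hp]
  rw [Gnext, if_pos ⟨⟨p, hup⟩, by omega⟩, show dmax - u.length - 1 = j by omega,
    show dmax - u.length = j + 1 by omega]

lemma Gnext_of_not_prefix {s : List (Fin 4)} (hs : ¬ s <+: pix t) :
    Gnext dmax qt v pix G t s = G s :=
  if_neg fun h => hs h.1

lemma Gnext_of_length_eq {s : List (Fin 4)} (hs : s.length = dmax) :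
    Gnext dmax qt v pix G t s = G s :=
  if_neg fun h => h.2.ne hs

lemma Gnext_mem_Icc (hqt : ∀ t s x, 0 < qt t s x) (hpixt : (pix t).length = dmax)
    (hG : ∀ s : List (Fin 4), s.length ≤ dmax → G s ∈ Set.Icc (0 : ℝ) 1)
    (s : List (Fin 4)) (hs : s.length ≤ dmax) :
    Gnext dmax qt v pix G t s ∈ Set.Icc (0 : ℝ) 1 := by
  by_cases hpre : s <+: pix t ∧ s.length < dmax
  · obtain ⟨⟨p, hsp⟩, hlt⟩ := hpre
    have hp : p.length = dmax - s.length - 1 + 1 := by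
      have := congrArg List.length hsp
      simp only [List.length_append] at this
      omega
    have hQ := Qd_pos (v := v) (pix := pix) (t := t) hqt hG
    obtain ⟨hG0, hG1⟩ := hG s hs
    rw [Gnext_of_append_eq hpixt hsp hp]
    refine ⟨div_nonneg (mul_nonneg hG0 (hQ _).le) (hQ _).le, ?_⟩
    rw [div_le_one (hQ _), Qd_succ_of_append_eq hpixt hsp hp]
    linarith [mul_nonneg (sub_nonneg.2 hG1) (hqt t s (v t)).le]
  · rw [Gnext, if_neg hpre]
    exact hG s hs

/-- The one-pixel Bayes step on a subtree `T` rooted at the block `u` of the path `S_t`,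
`p` being the rest of the pixel's path below `u`. -/
lemma weight_mul_qt_leafOf (hqt : ∀ t s x, 0 < qt t s x)
    (hG : ∀ s : List (Fin 4), s.length ≤ dmax → G s ∈ Set.Icc (0 : ℝ) 1)
    (hpixt : (pix t).length = dmax) :
    ∀ {D : ℕ} (u p : List (Fin 4)) (T : FullTree 4 D), u ++ p = pix t → p.length = D →
      FullTree.weight G u T * qt t (FullTree.leafOf u T p) (v t)
        = Qd dmax qt v pix G t D * FullTree.weight (Gnext dmax qt v pix G t) u T
  | 0, u, p, .leaf, hup, hp => by
      have hu : u = pix t := by simpa [List.length_eq_zero_iff.mp hp] using hup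
      have hqu : Qd dmax qt v pix G t 0 = qt t u (v t) := by
        rw [Qd, hu, List.take_of_length_le hpixt.le]
      rw [FullTree.weight_leaf, FullTree.weight_leaf, FullTree.leafOf_leaf, hqu,
        Gnext_of_length_eq (hu ▸ hpixt)]
      ring
  | j + 1, u, p, .leaf, hup, hp => by
      have hQ := Qd_pos (v := v) (pix := pix) (t := t) hqt hG (j + 1)
      rw [FullTree.weight_leaf, FullTree.weight_leaf, FullTree.leafOf_leaf,
        Gnext_of_append_eq hpixt hup hp]
      rw [Qd_succ_of_append_eq hpixt hup hp] at hQ ⊢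
      field_simp
      ring
  | _, _, [], .node _, _, hp => by simp at hp
  | D + 1, u, i₀ :: p, .node c, hup, hp => by
      have hup₀ : (u ++ [i₀]) ++ p = pix t := by simpa using hup
      have hchild := weight_mul_qt_leafOf hqt hG hpixt (u ++ [i₀]) p (c i₀) hup₀
        (by simpa using hp)
      have hoff : ∀ i ∈ ({i₀}ᶜ : Finset (Fin 4)),
          FullTree.weight (Gnext dmax qt v pix G t) (u ++ [i]) (c i)
            = FullTree.weight G (u ++ [i]) (c i) := by
        intro i hi
        refine FullTree.weight_congr _ _ fun s hs => Gnext_of_not_prefix fun hst => ?_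
        exact Finset.mem_compl.mp hi <| Finset.mem_singleton.mpr <|
          List.eq_of_append_singleton_prefix (hs.trans hst) ⟨p, hup₀⟩
      have hQ := Qd_pos (v := v) (pix := pix) (t := t) hqt hG (D + 1)
      rw [FullTree.weight_node, FullTree.weight_node, FullTree.leafOf_node_cons,
        Gnext_of_append_eq hpixt hup hp,
        Fintype.prod_eq_mul_prod_compl i₀, Fintype.prod_eq_mul_prod_compl i₀,
        Finset.prod_congr rfl hoff]
      field_simp
      linear_combination (G u * ∏ i ∈ {i₀}ᶜ, FullTree.weight G (u ++ [i]) (c i)) * hchild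

end Update

section Posterior

variable {dmax : ℕ} {V : Type} {qt : ℕ → List (Fin 4) → V → ℝ} {v : ℕ → V}
  {pix : ℕ → List (Fin 4)} {g : List (Fin 4) → ℝ}

lemma GT_mem_Icc (hqt : ∀ t s x, 0 < qt t s x) (hpix : ∀ i, (pix i).length = dmax)
    (hg : ∀ s : List (Fin 4), s.length ≤ dmax → g s ∈ Set.Icc (0 : ℝ) 1) :
    ∀ t, ∀ s : List (Fin 4), s.length ≤ dmax →
      GT dmax qt v pix g t s ∈ Set.Icc (0 : ℝ) 1
  | 0 => hg
  | t + 1 => Gnext_mem_Icc hqt (hpix t) (GT_mem_Icc hqt hpix hg t)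

lemma GT_of_length_eq (hg1 : ∀ s : List (Fin 4), s.length = dmax → g s = 0) :
    ∀ t, ∀ s : List (Fin 4), s.length = dmax → GT dmax qt v pix g t s = 0
  | 0 => hg1
  | t + 1 => fun s hs => (Gnext_of_length_eq hs).trans (GT_of_length_eq hg1 t s hs)

lemma weight_mul_like (hqt : ∀ t s x, 0 < qt t s x) (hpix : ∀ i, (pix i).length = dmax)
    (hg : ∀ s : List (Fin 4), s.length ≤ dmax → g s ∈ Set.Icc (0 : ℝ) 1)
    (m : FullTree 4 dmax) :
    ∀ t, FullTree.weight g [] m * like dmax qt v pix m t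
      = (∏ i ∈ Finset.range t, Qd dmax qt v pix (GT dmax qt v pix g i) i dmax)
        * FullTree.weight (GT dmax qt v pix g t) [] m
  | 0 => by simp [like, GT]
  | t + 1 => by
      have hstep := weight_mul_qt_leafOf (v := v) hqt (GT_mem_Icc (v := v) hqt hpix hg t)
        (hpix t) [] (pix t) m rfl (hpix t)
      rw [like, Finset.prod_range_succ, ← like, ← mul_assoc,
        weight_mul_like hqt hpix hg m t, mul_assoc, hstep, Finset.prod_range_succ, GT]
      ring

end Posterior

theorem stmt9_general (dmax : ℕ) (V : Type)
    (g : List (Fin 4) → ℝ)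
    (hg : ∀ s : List (Fin 4), s.length ≤ dmax → g s ∈ Set.Icc (0 : ℝ) 1)
    (hg1 : ∀ s : List (Fin 4), s.length = dmax → g s = 0)
    (qt : ℕ → List (Fin 4) → V → ℝ)
    (hqt : ∀ t s x, 0 < qt t s x)
    (v : ℕ → V) (pix : ℕ → List (Fin 4))
    (hpix : ∀ i, (pix i).length = dmax)
    (t : ℕ) (m : FullTree 4 dmax) :
    FullTree.weight g [] m * like dmax qt v pix m (t + 1)
        / (∑ m' : FullTree 4 dmax, FullTree.weight g [] m' * like dmax qt v pix m' (t + 1))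
      = FullTree.weight (GT dmax qt v pix g (t + 1)) [] m := by
  have hfactor := weight_mul_like (v := v) hqt hpix hg
  have hevidence :
      (∑ m' : FullTree 4 dmax, FullTree.weight g [] m' * like dmax qt v pix m' (t + 1))
        = ∏ i ∈ Finset.range (t + 1), Qd dmax qt v pix (GT dmax qt v pix g i) i dmax := by
    simp_rw [hfactor, ← Finset.mul_sum,
      FullTree.sum_weight_eq_one (GT_of_length_eq hg1 (t + 1)) dmax [] (zero_add dmax),
      mul_one]
  have hpos : 0 < ∏ i ∈ Finset.range (t + 1), Qd dmax qt v pix (GT dmax qt v pix g i) i dmax :=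
    Finset.prod_pos fun i _ => Qd_pos hqt (GT_mem_Icc hqt hpix hg i) dmax
  rw [hfactor, hevidence, mul_div_cancel_left₀ _ hpos.ne']

/-- Blocks are encoded by their quadrant paths `List (Fin 4)` of length
`≤ dmax`, and pixels by paths of full length `dmax`, `pix i` being the pixel scanned at
time `i` (injective raster scan).  With model prior
`p(m) = weight g [] m = ∏_{s ∈ L^m} (1-g_s) ∏_{s' ∈ I^m} g_{s'}`, likelihood
`p(v^t | m) = like dmax qt v pix m (t+1) = ∏_{i ≤ t} q̃(v_i | v^{i-1}, s_m(i))`, and the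
sequentially updated weights `g_{s|t} = GT dmax qt v pix g (t+1) s`, the posterior over
models retains the product form of the prior:
`p(m | v^t) = ∏_{s ∈ L^m} (1 - g_{s|t}) ∏_{s' ∈ I^m} g_{s'|t} = weight g_{·|t} [] m`. -/
theorem stmt9 (dmax : ℕ) (V : Type) [Fintype V]
    (g : List (Fin 4) → ℝ)
    (hg : ∀ s : List (Fin 4), s.length ≤ dmax → g s ∈ Set.Icc (0 : ℝ) 1)
    (hg1 : ∀ s : List (Fin 4), s.length = dmax → g s = 0)
    (qt : ℕ → List (Fin 4) → V → ℝ)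
    (hqt : ∀ t s x, 0 < qt t s x)
    (hqts : ∀ t s, ∑ x : V, qt t s x = 1)
    (v : ℕ → V) (pix : ℕ → List (Fin 4))
    (hpix : ∀ i, (pix i).length = dmax)
    (hinj : ∀ i j, i < 4 ^ dmax → j < 4 ^ dmax → pix i = pix j → i = j)
    (t : ℕ) (ht : t < 4 ^ dmax) (m : FullTree 4 dmax) :
    FullTree.weight g [] m * like dmax qt v pix m (t + 1)
        / (∑ m' : FullTree 4 dmax, FullTree.weight g [] m' * like dmax qt v pix m' (t + 1))
      = FullTree.weight (GT dmax qt v pix g (t + 1)) [] m :=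
  stmt9_general dmax V g hg hg1 qt hqt v pix hpix t m
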